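/- Let μ: ℂ → ℂ be continuous on ℂ, holomorphic away from a compact set containing the support of s, with μ(k) → 1 as |k| → ∞ at rate O(1/|k|), and suppose the 1-form ω = (μ(k)μ(−k)/k) dk + (conj(μ(k)μ(−k))/k̄) dk̄ is closed on the annulus {R^{−1} ≤ |k| ≤ R} for all large R. Then μ(0)² = conj(μ(0))², i.e., μ(0)² is real, so μ(0) is purely real or purely imaginary. -/

import Mathlib

open MeasureTheory Complex Filter ComplexConjugate
open scoped ENNReal NNReal Topology

/-- `∂φ = (1/2)(∂₁φ − i ∂₂φ)`. -/
noncomputable def pdOp (φ : ℂ → ℂ) (x : ℂ) : ℂ :=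
  (1 / 2 : ℂ) * (fderiv ℝ φ x 1 - Complex.I * fderiv ℝ φ x Complex.I)

/-- `∂̄φ = (1/2)(∂₁φ + i ∂₂φ)`. -/
noncomputable def dbOp (φ : ℂ → ℂ) (x : ℂ) : ℂ :=
  (1 / 2 : ℂ) * (fderiv ℝ φ x 1 + Complex.I * fderiv ℝ φ x Complex.I)

/-! With `f k = μ k * μ (-k)`, closedness of `ω = 2 Re (f k / k dk)` says that `∂̄ (f k / k)` is
real. Pulling back along `exp`, `ψ = f ∘ exp` has `Im ∂̄ψ = 0`, i.e. the plane field
`(Im ψ, Re ψ)` is divergence free. The divergence theorem on `[a, b] × [0, 2π]`, whose horizontal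
sides cancel by `2πi`-periodicity, shows that `∫₀^{2π} Im f (e^{a + iy}) dy` does not depend on `a`.
As `a → -∞` it tends to `2π Im f 0 = 2π Im (μ 0 ^ 2)`, and as `a → ∞` to `2π Im 1 = 0`. -/

lemma ContinuousLinearMap.apply_eq_re_smul_add_im_smul (L : ℂ →L[ℝ] ℂ) (c : ℂ) :
    L c = c.re • L 1 + c.im • L I := by
  rw [← map_smul, ← map_smul, ← map_add]
  congr 1
  apply Complex.ext <;> simp

lemma ContinuousLinearMap.apply_add_I_mul_apply_I_mul (L : ℂ →L[ℝ] ℂ) (c : ℂ) :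
    L c + I * L (I * c) = conj c * (L 1 + I * L I) := by
  rw [L.apply_eq_re_smul_add_im_smul c, L.apply_eq_re_smul_add_im_smul (I * c)]
  have hconj : conj c = c.re - c.im * I := by apply Complex.ext <;> simp
  simp only [mul_re, mul_im, I_re, I_im, real_smul, hconj]
  push_cast
  linear_combination c.im * L I * I_sq

lemma pdOp_conj (g : ℂ → ℂ) (k : ℂ) : pdOp (fun w => conj (g w)) k = conj (dbOp g k) := by
  have hderiv : ∀ v, fderiv ℝ (fun w => conj (g w)) k v = conj (fderiv ℝ g k v) := fun v => by
    rw [show (fun w => conj (g w)) = fun w => star (g w) from rfl, fderiv_star]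
    rfl
  simp only [pdOp, dbOp, hderiv, map_mul, map_add, conj_I, map_div₀, map_one, map_ofNat]
  ring

lemma DifferentiableAt.fderiv_real_apply {φ : ℂ → ℂ} {z : ℂ} (h : DifferentiableAt ℂ φ z)
    (v : ℂ) : fderiv ℝ φ z v = v * deriv φ z := by
  rw [h.fderiv_restrictScalars ℝ]
  simp

lemma dbOp_mul_of_differentiableAt {u v : ℂ → ℂ} {k : ℂ} (hu : DifferentiableAt ℝ u k)
    (hv : DifferentiableAt ℂ v k) : dbOp (fun w => u w * v w) k = v k * dbOp u k := by
  rw [dbOp, dbOp, fderiv_fun_mul hu (hv.restrictScalars ℝ)]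
  simp only [one_div, add_apply, smul_apply, hv.fderiv_real_apply, one_mul, smul_eq_mul]
  linear_combination (u k * deriv v k / 2) * I_sq

lemma dbOp_comp_of_differentiableAt {u φ : ℂ → ℂ} {z : ℂ} (hu : DifferentiableAt ℝ u (φ z))
    (hφ : DifferentiableAt ℂ φ z) : dbOp (u ∘ φ) z = conj (deriv φ z) * dbOp u (φ z) := by
  simp only [dbOp, fderiv_comp z hu (hφ.restrictScalars ℝ), ContinuousLinearMap.comp_apply,
    hφ.fderiv_real_apply, one_mul]
  linear_combination (1 / 2 : ℂ) * (fderiv ℝ u (φ z)).apply_add_I_mul_apply_I_mul (deriv φ z)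

lemma dbOp_comp_exp_im_eq_zero {f : ℂ → ℂ} (hf : ∀ k ≠ 0, DifferentiableAt ℝ f k)
    (hreal : ∀ k ≠ 0, (dbOp (fun w => f w / w) k).im = 0) (z : ℂ) :
    (dbOp (f ∘ cexp) z).im = 0 := by
  have hk : cexp z ≠ 0 := exp_ne_zero z
  have hquot : dbOp (fun w => f w / w) (cexp z) = (cexp z)⁻¹ * dbOp f (cexp z) := by
    simpa only [div_eq_mul_inv] using
      dbOp_mul_of_differentiableAt (hf _ hk) (differentiableAt_inv hk)
  have hcomp : dbOp (f ∘ cexp) z = (normSq (cexp z) : ℂ) * dbOp (fun w => f w / w) (cexp z) := by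
    rw [dbOp_comp_of_differentiableAt (hf _ hk) (differentiable_exp z), Complex.deriv_exp,
      hquot, ← mul_conj, mul_comm (cexp z), mul_assoc, mul_inv_cancel_left₀ hk]
  rw [hcomp, im_ofReal_mul, hreal _ hk, mul_zero]

lemma dbOp_im (ψ : ℂ → ℂ) (z : ℂ) :
    (dbOp ψ z).im = ((fderiv ℝ ψ z 1).im + (fderiv ℝ ψ z I).re) / 2 := by
  simp [dbOp]
  ring

theorem intervalIntegral_im_eq_of_dbOp_im_eq_zero {ψ : ℂ → ℂ} {T : ℝ} (hψ : Differentiable ℝ ψ)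
    (hper : Function.Periodic ψ (T * I)) (hdb : ∀ z, (dbOp ψ z).im = 0) (a b : ℝ) :
    ∫ y in 0..T, (ψ (a + y * I)).im = ∫ y in 0..T, (ψ (b + y * I)).im := by
  let e : ℝ × ℝ →L[ℝ] ℂ := equivRealProdCLM.symm
  have he : ∀ p : ℝ × ℝ, e p = p.1 + p.2 * I := fun p => by
    rw [← mk_eq_add_mul_I]; rfl
  have hF : ∀ p, HasFDerivAt (fun p => (ψ (e p)).im) (imCLM ∘L fderiv ℝ ψ (e p) ∘L e) p :=
    fun p => imCLM.hasFDerivAt.comp p ((hψ (e p)).hasFDerivAt.comp p e.hasFDerivAt)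
  have hG : ∀ p, HasFDerivAt (fun p => (ψ (e p)).re) (reCLM ∘L fderiv ℝ ψ (e p) ∘L e) p :=
    fun p => reCLM.hasFDerivAt.comp p ((hψ (e p)).hasFDerivAt.comp p e.hasFDerivAt)
  have hdiv : ∀ p : ℝ × ℝ, (imCLM ∘L fderiv ℝ ψ (e p) ∘L e) (1, 0)
      + (reCLM ∘L fderiv ℝ ψ (e p) ∘L e) (0, 1) = 0 := fun p => by
    have h1 : e (1, 0) = 1 := by simp [he]
    have h2 : e (0, 1) = I := by simp [he]
    simp only [ContinuousLinearMap.comp_apply, imCLM_apply, reCLM_apply, h1, h2]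
    linarith [hdb (e p), dbOp_im ψ (e p)]
  have hcont : Continuous ψ := hψ.continuous
  have key := integral2_divergence_prod_of_hasFDerivAt_off_countable _ _ _ _ a 0 b T ∅
    Set.countable_empty (by fun_prop) (by fun_prop) (fun p _ => hF p) (fun p _ => hG p)
    (by simp only [hdiv]; exact integrableOn_zero)
  have hperiod : ∀ x : ℝ, ψ (e (x, T)) = ψ (e (x, 0)) := fun x => by
    simpa [he] using hper x
  simp only [hdiv, intervalIntegral.integral_zero, hperiod, sub_self, zero_add] at key
  simp only [he] at key
  linarith

theorem tendsto_intervalIntegral_of_tendsto_uncurry {ι E : Type*} [NormedAddCommGroup E]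
    [NormedSpace ℝ E] [CompleteSpace E] {l : Filter ι} [l.IsCountablyGenerated] {F : ι → ℝ → E}
    {c : E} {a b : ℝ}
    (hF : ∀ i, Continuous (F i)) (hlim : Tendsto (Function.uncurry F) (l ×ˢ ⊤) (𝓝 c)) :
    Tendsto (fun i => ∫ x in a..b, F i x) l (𝓝 ((b - a) • c)) := by
  have hunif : TendstoUniformlyOn F (fun _ => c) l (Set.uIcc a b) := by
    rw [nhds_eq_comap_uniformity, tendsto_comap_iff] at hlim
    rw [tendstoUniformlyOn_iff_tendsto]
    exact hlim.mono_left (prod_mono le_rfl le_top)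
  rw [← intervalIntegral.integral_const]
  exact hunif.tendsto_intervalIntegral_of_continuousOn
    (Eventually.of_forall fun i => (hF i).continuousOn)

lemma norm_exp_add_mul_I (x y : ℝ) : ‖cexp (x + y * I)‖ = Real.exp x := by
  simp [norm_exp]

lemma tendsto_exp_add_mul_I_atBot :
    Tendsto (fun p : ℝ × ℝ => cexp (p.1 + p.2 * I)) (atBot ×ˢ ⊤) (𝓝 0) := by
  rw [tendsto_zero_iff_norm_tendsto_zero]
  simp only [norm_exp_add_mul_I]
  exact Real.tendsto_exp_atBot.comp tendsto_fst

lemma tendsto_exp_add_mul_I_atTop :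
    Tendsto (fun p : ℝ × ℝ => cexp (p.1 + p.2 * I)) (atTop ×ˢ ⊤) (Bornology.cobounded ℂ) := by
  rw [← tendsto_norm_atTop_iff_cobounded]
  simp only [norm_exp_add_mul_I]
  exact Real.tendsto_exp_atTop.comp tendsto_fst

lemma tendsto_cobounded_of_norm_sub_le_div_norm {E F : Type*} [NormedAddCommGroup E]
    [NormedAddCommGroup F] {f : E → F} {c : F}
    (h : ∃ C R : ℝ, ∀ x, R ≤ ‖x‖ → ‖f x - c‖ ≤ C / ‖x‖) :
    Tendsto f (Bornology.cobounded E) (𝓝 c) := by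
  obtain ⟨C, R, hCR⟩ := h
  rw [tendsto_iff_norm_sub_tendsto_zero]
  refine squeeze_zero' (Eventually.of_forall fun x => norm_nonneg _) ?_
    ((tendsto_const_nhds (x := C)).div_atTop tendsto_norm_cobounded_atTop)
  exact (tendsto_norm_cobounded_atTop.eventually_ge_atTop R).mono hCR

lemma dbOp_im_eq_zero_of_dbOp_eq_pdOp_conj {g : ℂ → ℂ} {k : ℂ}
    (h : dbOp g k = pdOp (fun w => conj (g w)) k) : (dbOp g k).im = 0 := by
  rw [pdOp_conj] at h
  exact conj_eq_iff_im.mp h.symm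

theorem im_apply_zero_eq_im_of_dbOp_div_im_eq_zero {f : ℂ → ℂ} {L : ℂ} (hf : Continuous f)
    (hdf : ∀ k ≠ 0, DifferentiableAt ℝ f k) (hreal : ∀ k ≠ 0, (dbOp (fun w => f w / w) k).im = 0)
    (hlim : Tendsto f (Bornology.cobounded ℂ) (𝓝 L)) : (f 0).im = L.im := by
  let J : ℝ → ℝ := fun a => ∫ y in 0..2 * Real.pi, ((f ∘ cexp) (a + y * I)).im
  have hJ : ∀ a, J a = J 0 := fun a =>
    intervalIntegral_im_eq_of_dbOp_im_eq_zero
      (fun z => (hdf _ (exp_ne_zero z)).comp z (by fun_prop))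
      (by simpa using exp_periodic.comp f) (dbOp_comp_exp_im_eq_zero hdf hreal) a 0
  have hJ_const : ∀ l, Tendsto J l (𝓝 (J 0)) := fun l => (tendsto_congr hJ).mpr tendsto_const_nhds
  have hJ_atBot : Tendsto J atBot (𝓝 ((2 * Real.pi - 0) • (f 0).im)) :=
    tendsto_intervalIntegral_of_tendsto_uncurry (by fun_prop)
      ((continuous_im.tendsto _).comp ((hf.tendsto 0).comp tendsto_exp_add_mul_I_atBot))
  have hJ_atTop : Tendsto J atTop (𝓝 ((2 * Real.pi - 0) • L.im)) :=
    tendsto_intervalIntegral_of_tendsto_uncurry (by fun_prop)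
      ((continuous_im.tendsto _).comp (hlim.comp tendsto_exp_add_mul_I_atTop))
  have h := (tendsto_nhds_unique (hJ_const _) hJ_atBot).symm.trans
    (tendsto_nhds_unique (hJ_const _) hJ_atTop)
  simpa [Real.pi_ne_zero] using h

theorem stmt15_general (μ : ℂ → ℂ)
    (hcont : Continuous μ)
    (hdecay : ∃ C R : ℝ, ∀ k : ℂ, R ≤ ‖k‖ → ‖μ k - 1‖ ≤ C / ‖k‖)
    (hdiff : ∀ k : ℂ, k ≠ 0 → DifferentiableAt ℝ μ k)
    (hclosed : ∀ k : ℂ, k ≠ 0 →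
      dbOp (fun w => μ w * μ (-w) / w) k = pdOp (fun w => conj (μ w * μ (-w)) / conj w) k) :
    μ 0 ^ 2 = conj (μ 0) ^ 2 ∧ ((μ 0).im = 0 ∨ (μ 0).re = 0) := by
  set f : ℂ → ℂ := fun w => μ w * μ (-w)
  have hreal : ∀ k ≠ 0, (dbOp (fun w => f w / w) k).im = 0 := fun k hk =>
    dbOp_im_eq_zero_of_dbOp_eq_pdOp_conj (by simpa only [map_div₀] using hclosed k hk)
  have hdf : ∀ k ≠ 0, DifferentiableAt ℝ f k := fun k hk =>
    (hdiff k hk).mul ((hdiff (-k) (neg_ne_zero.2 hk)).comp k differentiableAt_id.neg)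
  have hlim : Tendsto f (Bornology.cobounded ℂ) (𝓝 1) := by
    have hμ := tendsto_cobounded_of_norm_sub_le_div_norm hdecay
    simpa using hμ.mul (hμ.comp tendsto_neg_cobounded)
  have hf0 : (μ 0 ^ 2).im = 0 := by
    simpa [f, sq] using im_apply_zero_eq_im_of_dbOp_div_im_eq_zero (by fun_prop) hdf hreal hlim
  refine ⟨by rw [← map_pow, conj_eq_iff_im.mpr hf0], ?_⟩
  have hreim : (μ 0).re * (μ 0).im = 0 := by simpa [sq, mul_comm] using hf0
  exact (mul_eq_zero.mp hreim).symm

/-- If `μ` is continuous, holomorphic away from a compact set, `μ(k) = 1 + O(1/|k|)`, and the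
form `ω = (μ(k)μ(−k)/k)dk + (conj(μ(k)μ(−k))/k̄)dk̄` is closed away from `0`
(i.e. `∂̄(μ(k)μ(−k)/k) = ∂(conj(μ(k)μ(−k))/k̄)`), then `μ(0)² = conj(μ(0))²`, so
`μ(0)` is purely real or purely imaginary. -/
theorem stmt15 (μ : ℂ → ℂ) (K : Set ℂ) (hK : IsCompact K)
    (hcont : Continuous μ)
    (hhol : ∀ k ∉ K, DifferentiableAt ℂ μ k)
    (hdecay : ∃ C R : ℝ, ∀ k : ℂ, R ≤ ‖k‖ → ‖μ k - 1‖ ≤ C / ‖k‖)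
    (hdiff : ∀ k : ℂ, k ≠ 0 → DifferentiableAt ℝ μ k)
    (hclosed : ∀ k : ℂ, k ≠ 0 →
      dbOp (fun w => μ w * μ (-w) / w) k = pdOp (fun w => conj (μ w * μ (-w)) / conj w) k) :
    μ 0 ^ 2 = conj (μ 0) ^ 2 ∧ ((μ 0).im = 0 ∨ (μ 0).re = 0) :=
  stmt15_general μ hcont hdecay hdiff hclosed
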